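/- arXiv:1009.5421 — 5 statements merged into one kernel-verified Lean document; each statement's English description precedes it below -/
import Mathlib

section
/- Let K be an algebraically closed field of characteristic p > 0 and f ∈ K[x] an additive polynomial (f(x+y) = f(x)+f(y) identically) whose set of roots in K is exactly the prime field F_p. Then f = a · (x^p - x)^{p^n} for some n < ω and a ∈ K, a ≠ 0. -/
/-!
Translating by a root `c` of an additive polynomial `f` leaves `f` unchanged, so all roots of `f`
have the multiplicity `m` of the root `0`. Its roots being exactly the elements of `𝔽_p`, the
simple roots of `X ^ p - X`, this gives `f = a (X ^ p - X) ^ m`. As `x ↦ x ^ p - x` is additive and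
surjective on `K`, additivity of `f` makes `u ↦ u ^ m` additive, i.e. `(X + 1) ^ m = X ^ m + 1`.
Writing `m = p ^ n q` with `p ∤ q` and cancelling the Frobenius (`expand` is injective) leaves
`(X + 1) ^ q = X ^ q + 1`, whose coefficient of `X` shows `q = 0` in `K` unless `q = 1`.
-/

open Polynomial

namespace Polynomial

section Additive

variable {R : Type*} [CommRing R] [IsDomain R] [Infinite R] {f : R[X]}

theorem comp_X_add_C_of_additive (hadd : ∀ x y : R, f.eval (x + y) = f.eval x + f.eval y)
    (c : R) : f.comp (X + C c) = f + C (f.eval c) :=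
  Polynomial.funext fun x => by simp [eval_comp, hadd]

theorem rootMultiplicity_eq_rootMultiplicity_zero_of_additive
    (hadd : ∀ x y : R, f.eval (x + y) = f.eval x + f.eval y) {c : R} (hc : f.IsRoot c) :
    f.rootMultiplicity c = f.rootMultiplicity 0 := by
  rw [rootMultiplicity_eq_natTrailingDegree, comp_X_add_C_of_additive hadd, hc.eq_zero, C_0,
    add_zero, rootMultiplicity_eq_natTrailingDegree']

end Additive

theorem roots_eq_nsmul_dedup {R : Type*} [CommRing R] [IsDomain R] [DecidableEq R] {f : R[X]}
    {m : ℕ} (h : ∀ c, f.IsRoot c → f.rootMultiplicity c = m) : f.roots = m • f.roots.dedup := by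
  ext c
  rw [Multiset.count_nsmul, Multiset.count_dedup]
  split_ifs with hc
  · rw [count_roots, h c (isRoot_of_mem_roots hc), mul_one]
  · rw [Multiset.count_eq_zero.mpr hc, mul_zero]

theorem eq_C_leadingCoeff_mul_of_roots_eq {K : Type*} [Field K] {f g : K[X]} (hf : f.Splits)
    (hg : g.Splits) (hmon : g.Monic) (h : f.roots = g.roots) : f = C f.leadingCoeff * g := by
  have hg' : g = (g.roots.map fun a => X - C a).prod := by
    simpa [hmon.leadingCoeff] using hg.eq_prod_roots
  conv_lhs => rw [hf.eq_prod_roots, h, ← hg']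

theorem mem_roots_X_pow_char_sub_X {K : Type*} [Field K] (p : ℕ) [Fact p.Prime] [CharP K p]
    {c : K} : c ∈ (X ^ p - X : K[X]).roots ↔ c ∈ Set.range (ZMod.castHom (dvd_refl p) K) := by
  rw [mem_roots (FiniteField.X_pow_card_sub_X_ne_zero K (Fact.out : p.Prime).one_lt), IsRoot.def,
    eval_sub, eval_pow, eval_X, sub_eq_zero, ← Subfield.mem_bot_iff_pow_eq_self,
    ← ZMod.fieldRange_castHom_eq_bot, RingHom.mem_fieldRange, Set.mem_range]

theorem eq_C_mul_X_pow_char_sub_X_pow_of_additive {K : Type*} [Field K] [IsAlgClosed K]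
    (p : ℕ) [Fact p.Prime] [CharP K p] {f : K[X]} (hf : f ≠ 0)
    (hadd : ∀ x y : K, f.eval (x + y) = f.eval x + f.eval y)
    (hker : ∀ c, f.IsRoot c ↔ c ∈ Set.range (ZMod.castHom (dvd_refl p) K)) :
    f = C f.leadingCoeff * (X ^ p - X) ^ f.rootMultiplicity 0 := by
  classical
  refine eq_C_leadingCoeff_mul_of_roots_eq (IsAlgClosed.splits f) (IsAlgClosed.splits _)
    ((monic_X_pow_sub (by rw [degree_X]; exact_mod_cast (Fact.out : p.Prime).one_lt)).pow _) ?_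
  rw [roots_pow,
    roots_eq_nsmul_dedup fun c => rootMultiplicity_eq_rootMultiplicity_zero_of_additive hadd]
  congr 1
  refine (Multiset.Nodup.ext (Multiset.nodup_dedup _)
    (nodup_roots (galois_poly_separable p p dvd_rfl))).mpr fun c => ?_
  rw [Multiset.mem_dedup, mem_roots_X_pow_char_sub_X, mem_roots hf, hker]

theorem add_pow_eq_of_additive_C_mul_pow {K : Type*} [Field K] [IsAlgClosed K] {g : K[X]}
    (hg : g.natDegree ≠ 0) (hgadd : ∀ x y : K, g.eval (x + y) = g.eval x + g.eval y)
    {a : K} (ha : a ≠ 0) {m : ℕ}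
    (hadd : ∀ x y : K, (C a * g ^ m).eval (x + y) = (C a * g ^ m).eval x + (C a * g ^ m).eval y)
    (u v : K) : (u + v) ^ m = u ^ m + v ^ m := by
  obtain ⟨x, rfl⟩ := IsAlgClosed.eval_surjective hg u
  obtain ⟨y, rfl⟩ := IsAlgClosed.eval_surjective hg v
  have h := hadd x y
  simp only [eval_mul, eval_C, eval_pow, hgadd] at h
  exact mul_left_cancel₀ ha (h.trans (mul_add _ _ _).symm)

theorem exists_eq_pow_of_X_add_one_pow_eq {R : Type*} [CommRing R] (p : ℕ) [Fact p.Prime]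
    [CharP R p] {m : ℕ} (hm : m ≠ 0) (h : (X + 1 : R[X]) ^ m = X ^ m + 1) : ∃ n, m = p ^ n := by
  have hp : p.Prime := Fact.out
  obtain ⟨n, q, hpq, rfl⟩ := Nat.exists_eq_pow_mul_and_not_dvd hm p hp.ne_one
  have hq : (X + 1 : R[X]) ^ q = X ^ q + 1 :=
    expand_injective (pow_pos hp.pos n) (by simpa [pow_mul, add_pow_char_pow] using h)
  have hq1 : q = 1 := by
    by_contra hq1
    have hcoeff := congrArg (coeff · 1) hq
    simp only [coeff_X_add_one_pow, Nat.choose_one_right, coeff_add, coeff_X_pow, Ne.symm hq1,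
      ↓reduceIte, coeff_one, one_ne_zero, add_zero] at hcoeff
    exact hpq ((CharP.cast_eq_zero_iff R p q).mp hcoeff)
  exact ⟨n, by rw [hq1, mul_one]⟩

end Polynomial

theorem additive_polynomial_kernel_Fp (p : ℕ) [Fact p.Prime] (K : Type*) [Field K] [CharP K p]
    [IsAlgClosed K] (f : K[X])
    (hadd : ∀ x y : K, f.eval (x + y) = f.eval x + f.eval y)
    (hker : {x : K | f.eval x = 0} = Set.range (ZMod.castHom (dvd_refl p) K)) :
    ∃ (n : ℕ) (a : K), a ≠ 0 ∧ f = C a * (X ^ p - X) ^ (p ^ n) := by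
  classical
  have hp : p.Prime := Fact.out
  have hroot (c : K) : f.IsRoot c ↔ c ∈ Set.range (ZMod.castHom (dvd_refl p) K) := by
    rw [← hker]; rfl
  have hf : f ≠ 0 := by
    rintro rfl
    refine Set.infinite_univ (α := K) ?_
    simpa [← hker] using Set.finite_range (ZMod.castHom (dvd_refl p) K)
  have ha : f.leadingCoeff ≠ 0 := leadingCoeff_ne_zero.mpr hf
  have hm : f.rootMultiplicity 0 ≠ 0 :=
    ((rootMultiplicity_pos hf).mpr ((hroot 0).mpr ⟨0, map_zero _⟩)).ne'
  have hfeq := eq_C_mul_X_pow_char_sub_X_pow_of_additive p hf hadd hroot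
  have hdeg : (X ^ p - X : K[X]).natDegree ≠ 0 :=
    (FiniteField.X_pow_card_sub_X_natDegree_eq K hp.one_lt).trans_ne hp.ne_zero
  have hgadd (x y : K) :
      (X ^ p - X : K[X]).eval (x + y) = (X ^ p - X : K[X]).eval x + (X ^ p - X : K[X]).eval y := by
    simp only [eval_sub, eval_pow, eval_X, add_pow_char]; ring
  have hpow := add_pow_eq_of_additive_C_mul_pow hdeg hgadd ha (hfeq ▸ hadd)
  obtain ⟨n, hn⟩ := exists_eq_pow_of_X_add_one_pow_eq p hm
    (Polynomial.funext fun x => by simpa using hpow x 1)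
  rw [hn] at hfeq
  exact ⟨n, _, ha, hfeq⟩
end

section
/- Let K be a field of characteristic p > 0 such that K has no Artin-Schreier extension, i.e., the map x ↦ x^p - x is surjective on K. If k ⊆ K is the relative algebraic closure of F_p in K, then the map x ↦ x^p - x is also surjective on k. -/
theorem AS_closed_relative_algebraic_closure (p : ℕ) [Fact p.Prime] (K : Type*) [Field K]
    [CharP K p] (hK : ∀ a : K, ∃ b : K, b ^ p - b = a) :
    letI : Algebra (ZMod p) K := ZMod.algebra _ _
    ∀ a : K, IsAlgebraic (ZMod p) a → ∃ b : K, IsAlgebraic (ZMod p) b ∧ b ^ p - b = a := by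
  letI : Algebra (ZMod p) K := ZMod.algebra _ _
  intro a ha
  obtain ⟨b, hb⟩ := hK a
  refine ⟨b, ?_, hb⟩
  have hp2 : 1 < p := (Fact.out : p.Prime).one_lt
  set F := IntermediateField.adjoin (ZMod p) {a} with hF
  have haF : a ∈ F := IntermediateField.mem_adjoin_simple_self _ a
  haveI : FiniteDimensional (ZMod p) F :=
    IntermediateField.adjoin.finiteDimensional ha.isIntegral
  haveI : Algebra.IsIntegral (ZMod p) F := Algebra.IsIntegral.of_finite _ _
  have hbF : IsIntegral F b := by
    refine ⟨Polynomial.X ^ p - Polynomial.X - Polynomial.C ⟨a, haF⟩, ?_, ?_⟩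
    · have h1 : (Polynomial.X + Polynomial.C (⟨a, haF⟩ : F)).degree < (p : WithBot ℕ) := by
        rw [Polynomial.degree_X_add_C]
        exact_mod_cast hp2
      have := Polynomial.monic_X_pow_sub (p := Polynomial.X + Polynomial.C (⟨a, haF⟩ : F))
        (n := p) h1
      simpa [sub_sub] using this
    · simp [Polynomial.eval₂_sub, Polynomial.eval₂_pow, sub_sub, ← hb,
        IntermediateField.algebraMap_apply]
  exact (isIntegral_trans b hbF).isAlgebraic
end

section
/- Let (K, v) be a valued field of characteristic p > 0 such that the Artin-Schreier map x ↦ x^p - x is surjective on K. Then the value group Γ = v(K^×) is p-divisible. -/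
lemma aux_gt_one (p : ℕ) [Fact p.Prime] (K : Type*) [Field K]
    (Γ : Type*) [LinearOrderedCommGroupWithZero Γ] (v : Valuation K Γ)
    (hK : ∀ a : K, ∃ b : K, b ^ p - b = a) :
    ∀ γ : Γ, 1 < γ → (∃ x : K, v x = γ) →
      ∃ δ : Γ, δ ≠ 0 ∧ (∃ x : K, v x = δ) ∧ δ ^ p = γ := by
  rintro γ hγ ⟨x, rfl⟩
  obtain ⟨b, hb⟩ := hK x
  have hp : 2 ≤ p := (Fact.out : p.Prime).two_le
  have hvb : 1 < v b := by
    by_contra h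
    push_neg at h
    have h1 : v (b ^ p) ≤ 1 := by
      rw [map_pow]; exact pow_le_one₀ (zero_le') h
    have := (v.map_sub (b ^ p) b).trans_lt (max_lt (h1.trans_lt hγ) (h.trans_lt hγ))
    rw [hb] at this
    exact lt_irrefl _ this
  have hlt : v b < v (b ^ p) := by
    rw [map_pow]
    calc v b = v b ^ 1 := (pow_one _).symm
    _ < v b ^ p := pow_lt_pow_right₀ hvb (by omega)
  refine ⟨v b, ?_, ⟨b, rfl⟩, ?_⟩
  · exact (zero_lt_one.trans hvb).ne'
  · rw [← map_pow, ← Valuation.map_sub_eq_of_lt_left v hlt, hb]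

theorem value_group_p_divisible (p : ℕ) [Fact p.Prime] (K : Type*) [Field K] [CharP K p]
    (Γ : Type*) [LinearOrderedCommGroupWithZero Γ] (v : Valuation K Γ)
    (hK : ∀ a : K, ∃ b : K, b ^ p - b = a) :
    ∀ γ : Γ, γ ≠ 0 → (∃ x : K, v x = γ) →
      ∃ δ : Γ, δ ≠ 0 ∧ (∃ x : K, v x = δ) ∧ δ ^ p = γ := by
  rintro γ hγ ⟨x, rfl⟩
  rcases lt_trichotomy (v x) 1 with h | h | h
  · have hγpos : 0 < v x := lt_of_le_of_ne zero_le' (Ne.symm hγ)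
    have hinv : 1 < (v x)⁻¹ := by
      exact (one_lt_inv₀ hγpos).2 h
    have hx0 : x ≠ 0 := fun h0 => hγ (by simp [h0])
    obtain ⟨δ, hδ0, ⟨y, hy⟩, hδp⟩ := aux_gt_one p K Γ v hK (v x)⁻¹ hinv
      ⟨x⁻¹, by rw [map_inv₀]⟩
    exact ⟨δ⁻¹, inv_ne_zero hδ0, ⟨y⁻¹, by rw [map_inv₀, hy]⟩,
      by rw [inv_pow, hδp, inv_inv]⟩
  · exact ⟨1, one_ne_zero, ⟨1, map_one v⟩, by rw [one_pow, h]⟩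
  · exact aux_gt_one p K Γ v hK (v x) h ⟨x, rfl⟩
end

section
/- Let K be a field of characteristic p > 0. Then there is no rational function h/g ∈ K(X) \ K (with g, h ∈ K[X] coprime) satisfying X · ((h/g)^p - (h/g)) = 1 in K(X), equivalently X · (h^p - h·g^{p-1}) = g^p in K[X]. -/
theorem no_rational_solution_X_AS (p : ℕ) [Fact p.Prime] (K : Type*) [Field K] [CharP K p] :
    ¬ ∃ y : RatFunc K, RatFunc.X * (y ^ p - y) = 1 := by
  rintro ⟨y, hy⟩
  have hp : p.Prime := Fact.out
  have hps : p - 1 + 1 = p := Nat.succ_pred_eq_of_pos hp.pos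
  set n := y.num with hn
  set d := y.denom with hdef
  have hd0 : d ≠ 0 := y.denom_ne_zero
  have hcop : IsCoprime n d := RatFunc.isCoprime_num_denom y
  set φ := algebraMap (Polynomial K) (RatFunc K) with hφ
  have hB0 : φ d ≠ 0 := by simpa [hφ] using RatFunc.algebraMap_ne_zero hd0
  have hBp0 : φ d ^ p ≠ 0 := pow_ne_zero _ hB0
  -- clear denominators to get a polynomial identity
  have key : Polynomial.X * (n ^ p - n * d ^ (p - 1)) = d ^ p := by
    apply RatFunc.algebraMap_injective K
    have hy' : φ Polynomial.X * ((φ n / φ d) ^ p - φ n / φ d) = 1 := by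
      rw [hφ, RatFunc.num_div_denom, RatFunc.algebraMap_X]; exact hy
    have h1 : (φ n / φ d) ^ p * φ d ^ p = φ n ^ p := by
      rw [div_pow, div_mul_cancel₀ _ hBp0]
    have h2 : (φ n / φ d) * φ d ^ p = φ n * φ d ^ (p - 1) := by
      have : φ d ^ p = φ d * φ d ^ (p - 1) := by
        conv_lhs => rw [← hps, pow_succ']
      rw [this, ← mul_assoc, div_mul_cancel₀ _ hB0]
    have := congrArg (· * φ d ^ p) hy'
    simp only [one_mul] at this
    calc φ (Polynomial.X * (n ^ p - n * d ^ (p - 1)))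
        = φ Polynomial.X * (φ n ^ p - φ n * φ d ^ (p - 1)) := by
          push_cast [map_mul, map_sub, map_pow]; ring
      _ = φ Polynomial.X * ((φ n / φ d) ^ p * φ d ^ p - (φ n / φ d) * φ d ^ p) := by
          rw [h1, h2]
      _ = φ Polynomial.X * ((φ n / φ d) ^ p - φ n / φ d) * φ d ^ p := by ring
      _ = φ d ^ p := this
      _ = φ (d ^ p) := by rw [map_pow]
  -- X divides d
  have hXd : Polynomial.X ∣ d := by
    refine Polynomial.prime_X.dvd_of_dvd_pow (n := p) ?_
    exact ⟨_, key.symm⟩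
  -- X divides n
  have hXn : Polynomial.X ∣ n := by
    refine Polynomial.prime_X.dvd_of_dvd_pow (n := p) ?_
    have h1 : Polynomial.X ∣ d ^ p := dvd_pow hXd hp.ne_zero
    have h2 : Polynomial.X ∣ n * d ^ (p - 1) := by
      exact Dvd.dvd.mul_left (dvd_pow hXd (Nat.sub_ne_zero_of_lt hp.one_lt)) n
    have h3 : Polynomial.X ∣ Polynomial.X * (n ^ p - n * d ^ (p - 1)) := ⟨_, rfl⟩
    -- from key, X ∣ X * (n^p - n d^(p-1)) = d^p, and n^p = (n^p - n d^(p-1)) + n d^(p-1)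
    have h4 : Polynomial.X ∣ n ^ p - n * d ^ (p - 1) := by
      obtain ⟨e, he⟩ := hXd
      have : n ^ p - n * d ^ (p - 1) = Polynomial.X ^ (p - 1) * e ^ p := by
        have hkey := key
        rw [he] at hkey
        have hx0 : (Polynomial.X : Polynomial K) ≠ 0 := Polynomial.X_ne_zero
        apply mul_left_cancel₀ hx0
        have hxp : (Polynomial.X : Polynomial K) ^ p = Polynomial.X * Polynomial.X ^ (p - 1) := by
          conv_lhs => rw [← hps]
          rw [pow_succ']
        rw [he, hkey, mul_pow, hxp]; ring
      rw [this]
      exact Dvd.dvd.mul_right (dvd_pow_self _ (Nat.sub_ne_zero_of_lt hp.one_lt)) _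
    have : n ^ p = (n ^ p - n * d ^ (p - 1)) + n * d ^ (p - 1) := by ring
    rw [this]
    exact dvd_add h4 h2
  exact Polynomial.not_isUnit_X (hcop.isUnit_of_dvd' hXn hXd)
end

section
/- Let K be a field of characteristic p > 0 and suppose a ∈ K is transcendental over a subfield L ⊆ K. Then there do not exist coprime polynomials g, h ∈ L[X] with a · ((h(a)/g(a))^p - h(a)/g(a)) = 1. -/
open Polynomial

theorem no_coprime_solution_transcendental (p : ℕ) [Fact p.Prime] (L K : Type*) [Field L]
    [Field K] [Algebra L K] [CharP K p] (a : K) (ha : Transcendental L a) :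
    ¬ ∃ g h : L[X], IsCoprime g h ∧
        a * ((aeval a h / aeval a g) ^ p - aeval a h / aeval a g) = 1 := by
  rintro ⟨g, h, hco, heq⟩
  have hp : p.Prime := Fact.out
  have hp2 : 2 ≤ p := hp.two_le
  have hp1 : p - 1 + 1 = p := Nat.succ_pred_eq_of_pos hp.pos
  have hinj : ∀ q : L[X], aeval a q = 0 → q = 0 := (transcendental_iff).mp ha
  have hg0 : g ≠ 0 := by
    rintro rfl
    rw [map_zero, div_zero, zero_pow hp.pos.ne', sub_zero, mul_zero] at heq
    exact zero_ne_one heq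
  have hG : aeval a g ≠ 0 := fun h0 => hg0 (hinj g h0)
  set G := aeval a g with hGdef
  set H := aeval a h with hHdef
  have hGp : G ^ p = G * G ^ (p - 1) := by rw [← pow_succ', hp1]
  -- polynomial identity
  have key : (X * (h ^ p - h * g ^ (p - 1)) : L[X]) = g ^ p := by
    have e1 : (H / G) ^ p * G ^ p = H ^ p := by
      rw [div_pow, div_mul_cancel₀ _ (pow_ne_zero p hG)]
    have e2 : (H / G) * G ^ p = H * G ^ (p - 1) := by
      rw [hGp]; field_simp
    have h2 : a * (H ^ p - H * G ^ (p - 1)) = G ^ p := by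
      calc a * (H ^ p - H * G ^ (p - 1))
          = (a * ((H / G) ^ p - H / G)) * G ^ p := by rw [← e1, ← e2]; ring
        _ = G ^ p := by rw [heq, one_mul]
    have h3 : aeval a (X * (h ^ p - h * g ^ (p - 1)) - g ^ p) = 0 := by
      simp only [map_sub, map_mul, map_pow, aeval_X, ← hGdef, ← hHdef]
      rw [h2]; ring
    exact sub_eq_zero.mp (hinj _ h3)
  have hXg : (X : L[X]) ∣ g :=
    Polynomial.prime_X.dvd_of_dvd_pow ⟨_, key.symm⟩
  obtain ⟨g1, rfl⟩ := hXg
  have hXcan : (X : L[X]) * (h ^ p - h * (X * g1) ^ (p - 1)) = X * (X ^ (p - 1) * g1 ^ p) := by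
    rw [key, mul_pow, ← mul_assoc, ← pow_succ', hp1]
  have hc : (h ^ p - h * (X * g1) ^ (p - 1) : L[X]) = X ^ (p - 1) * g1 ^ p :=
    mul_left_cancel₀ Polynomial.X_ne_zero hXcan
  have hne : p - 1 ≠ 0 := by omega
  have hXhp : (X : L[X]) ∣ h ^ p := by
    rw [sub_eq_iff_eq_add] at hc
    rw [hc]
    exact dvd_add ((dvd_pow_self X hne).mul_right _)
      ((dvd_pow (dvd_mul_right X g1) hne).mul_left h)
  have hXh : (X : L[X]) ∣ h := Polynomial.prime_X.dvd_of_dvd_pow hXhp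
  exact Polynomial.not_isUnit_X (hco.isUnit_of_dvd' (dvd_mul_right X g1) hXh)
end
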